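/- Let X_n be the Class CI Wigner-type ensemble, let m ≥ 3, and let g ∈ D_{2m} be any element of the dihedral group (a cyclic shift γ^ν or a reflection τγ^ν). Then lim_{n→∞} n^{−m} · Σ_{P ∈ S_n^{good}(π̂_g)} ∏_{l=1}^m E[a_n(P_{1,l})·a_n(P_{2,g(l)})] equals 0 if m is odd, and equals 2^{m+1}·σ^{2m} if m is even; in particular this limit is the same as for the Class DIII ensemble. -/

import Mathlib

open MeasureTheory ProbabilityTheory Matrix Filter

noncomputable section

/-- The (unnormalized) class CI block matrix built from `X₁, X₂`; its `(p,q)` entry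
is `a_n(p,q)`, the `(p,q)` entry of `√(2n)·X_n`. `[2n]` is encoded as `Fin n ⊕ Fin n`. -/
def cIBlock {n : ℕ} (X₁ X₂ : Matrix (Fin n) (Fin n) ℝ) :
    Matrix (Fin n ⊕ Fin n) (Fin n ⊕ Fin n) ℝ :=
  Matrix.fromBlocks X₁ X₂ X₂ (-X₁)

/-- The space `M_n^{CI}`: block matrices `[[X₁,X₂],[X₂,−X₁]]` with `X₁, X₂`
real symmetric. -/
def MCI (n : ℕ) : Set (Matrix (Fin n ⊕ Fin n) (Fin n ⊕ Fin n) ℝ) :=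
  {M | ∃ X₁ X₂ : Matrix (Fin n) (Fin n) ℝ,
    X₁ᵀ = X₁ ∧ X₂ᵀ = X₂ ∧ M = Matrix.fromBlocks X₁ X₂ X₂ (-X₁)}

/-- The coordinate functional `X ↦ X_{p,q}` on `M_n^{CI}` is nonzero. -/
def NonzeroAtCI (n : ℕ) (P : (Fin n ⊕ Fin n) × (Fin n ⊕ Fin n)) : Prop :=
  ∃ M ∈ MCI n, M P.1 P.2 ≠ 0

/-- `(p,q) ∼ (r,s)`: both coordinate functionals on `M_n^{CI}` are nonzero and
equal up to sign. -/
def simCI (n : ℕ) (P Q : (Fin n ⊕ Fin n) × (Fin n ⊕ Fin n)) : Prop :=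
  NonzeroAtCI n P ∧ NonzeroAtCI n Q ∧
    ((∀ M ∈ MCI n, M Q.1 Q.2 = M P.1 P.2) ∨
      (∀ M ∈ MCI n, M Q.1 Q.2 = -(M P.1 P.2)))

/-- A multi-index `P = (P_{i,l}) = ((p_{i,l},q_{i,l}))` is consistent if
`q_{i,l} = p_{i,l+1}` cyclically, for `i = 1, 2`. -/
def IsConsistent {n m : ℕ} [NeZero m]
    (P : Fin 2 → Fin m → ((Fin n ⊕ Fin n) × (Fin n ⊕ Fin n))) : Prop :=
  ∀ i l, (P i l).2 = (P i (l + 1)).1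

/-- `P ∈ S_n^{good}(π̂_g)`: `P` is a consistent multi-index, every `P_{i,l}` lies in
the domain of `∼`, and the `∼`-relations among the `2m` index pairs are exactly those
given by the pair partition `π̂_g = {{(1,l),(2,g(l))} : l ∈ [m]}`. -/
def SGoodCI (n m : ℕ) [NeZero m] (g : Fin m → Fin m)
    (P : Fin 2 → Fin m → ((Fin n ⊕ Fin n) × (Fin n ⊕ Fin n))) : Prop :=
  IsConsistent P ∧ (∀ i l, NonzeroAtCI n (P i l)) ∧
    ∀ i l i' l', simCI n (P i l) (P i' l') ↔
      ((i = i' ∧ l = l') ∨ (i = 0 ∧ i' = 1 ∧ l' = g l) ∨ (i = 1 ∧ i' = 0 ∧ l = g l'))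

/-!
Two entries of a class CI matrix are equal up to sign exactly when they lie in blocks of the
same type (diagonal or off-diagonal) and carry the same unordered pair of labels in `[n]`: this
is the `entryClass` of the entry. Hence a multi-index is good iff each edge `l` of the first
cycle has the class of the edge `g l` of the second, and the `m` edges of the first cycle have
distinct classes; each factor of a good term is then `±σ²`.

For `g ∈ D_{2m}` there is a permutation `φ` of the vertices of the `m`-cycle carrying the edge
`g l` onto the edge `l`. When the `m` labels along the first cycle are distinct and `m ≥ 3`, the
second row is forced to be the first one relabelled by `φ` with all sides flipped by one bit `c`.
These multi-indices are counted by `2^m · 2 · n(n-1)⋯(n-m+1)` and their sign is `(-1)^m` if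
`c` is set and `1` otherwise, which gives the limit `2^m (1 + (-1)^m) σ^{2m}`. Every good
multi-index is determined by its first row and three bits per vertex, so those with a repeated
label number at most `8^m (n^m - n(n-1)⋯(n-m+1)) = o(n^m)`.
-/

open Topology

lemma Bool.xor_swap_of_xor_eq {a b c d : Bool} (h : xor a b = xor c d) :
    xor b d = xor a c := by
  revert a b c d; decide

lemma forall_eq_iff_pairing_iff {ι β : Type*} {g : ι → ι} (hg : Function.Bijective g)
    (K : Fin 2 → ι → β) :
    (∀ i l i' l', K i l = K i' l' ↔ ((i = i' ∧ l = l') ∨ (i = 0 ∧ i' = 1 ∧ l' = g l) ∨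
        (i = 1 ∧ i' = 0 ∧ l = g l'))) ↔
      (∀ l, K 1 (g l) = K 0 l) ∧ Function.Injective (K 0) := by
  refine ⟨fun h => ⟨fun l => ((h 0 l 1 (g l)).mpr (by simp)).symm,
    fun l l' hl => by simpa using (h 0 l 0 l').mp hl⟩, fun ⟨hmatch, hinj⟩ => ?_⟩
  set e := Equiv.ofBijective g hg
  have hK1 : ∀ j, K 1 j = K 0 (e.symm j) := fun j => by
    rw [← hmatch, ← Equiv.ofBijective_apply g hg, Equiv.apply_symm_apply]
  intro i l i' l'
  fin_cases i <;> fin_cases i' <;> simp [hK1, hinj.eq_iff, Equiv.eq_symm_apply, e, eq_comm]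

section Cycle

variable {m : ℕ} [NeZero m]

lemma Fin.add_one_ne_self (hm : 3 ≤ m) (j : Fin m) : j + 1 ≠ j := by
  obtain ⟨k, rfl⟩ : ∃ k, m = k + 3 := ⟨m - 3, by omega⟩
  simp

lemma Fin.add_one_add_one_ne_self (hm : 3 ≤ m) (j : Fin m) : j + 1 + 1 ≠ j := by
  obtain ⟨k, rfl⟩ : ∃ k, m = k + 3 := ⟨m - 3, by omega⟩
  rw [add_assoc, Ne, add_eq_left]
  simp [Fin.ext_iff, Fin.val_add, Nat.mod_eq_of_lt (show 2 < k + 3 by omega)]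

open Fin.NatCast in
lemma Fin.apply_eq_apply_zero_of_apply_add_one {α : Type*} {f : Fin m → α} (h : ∀ j, f (j + 1) = f j)
    (j : Fin m) : f j = f 0 := by
  have hnat : ∀ k : ℕ, f k = f 0 := by
    intro k
    induction k with
    | zero => simp
    | succ k ih => rw [Nat.cast_succ, h, ih]
  simpa using hnat j

lemma injective_sym2_add_one (hm : 3 ≤ m) : Function.Injective fun l : Fin m => s(l, l + 1) := by
  intro l l' h
  rcases Sym2.eq_iff.mp h with ⟨h, -⟩ | ⟨rfl, h⟩
  · exact h
  · exact absurd h (Fin.add_one_add_one_ne_self hm l')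

lemma eq_of_forall_sym2_eq {α : Type*} (hm : 3 ≤ m) {x b : Fin m → α}
    (hb : Function.Injective b) (h : ∀ j, s(x j, x (j + 1)) = s(b j, b (j + 1))) : x = b := by
  funext j
  by_contra hj
  obtain ⟨hxj, hxj₁⟩ : x j = b (j + 1) ∧ x (j + 1) = b j := by
    simpa [hj] using Sym2.eq_iff.mp (h j)
  rcases Sym2.eq_iff.mp (h (j + 1)) with ⟨h', -⟩ | ⟨h', -⟩
  · exact Fin.add_one_ne_self hm j (hb (hxj₁.symm.trans h')).symm
  · exact Fin.add_one_add_one_ne_self hm j (hb (hxj₁.symm.trans h')).symm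

theorem exists_perm_sym2_eq_of_dihedral {g : Fin m → Fin m}
    (hg : (∃ ν : Fin m, g = fun l => l + ν) ∨ (∃ ν : Fin m, g = fun l => -(l + ν) - 1)) :
    ∃ φ : Equiv.Perm (Fin m), ∀ l, s(φ (g l), φ (g l + 1)) = s(l, l + 1) := by
  rcases hg with ⟨ν, rfl⟩ | ⟨ν, rfl⟩
  · refine ⟨Equiv.subRight ν, fun l => ?_⟩
    simp only [Equiv.subRight_apply, add_right_comm l ν 1, add_sub_cancel_right]
  · refine ⟨(Equiv.neg (Fin m)).trans (Equiv.subRight ν), fun l => ?_⟩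
    have h₁ : -(-(l + ν) - 1) - ν = l + 1 := by abel
    have h₂ : -(-(l + ν) - 1 + 1) - ν = l := by abel
    simp only [Equiv.trans_apply, Equiv.neg_apply, Equiv.subRight_apply, h₁, h₂, Sym2.eq_swap]

lemma bijective_of_sym2_eq (hm : 3 ≤ m) {g : Fin m → Fin m} {φ : Equiv.Perm (Fin m)}
    (hφ : ∀ l, s(φ (g l), φ (g l + 1)) = s(l, l + 1)) : Function.Bijective g := by
  refine Finite.injective_iff_bijective.mp fun l l' h => injective_sym2_add_one hm ?_
  simp only [← hφ, h]

end Cycle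

open Finset in
lemma card_filter_not_injective (n m : ℕ) :
    #(univ.filter fun a : Fin m → Fin n => ¬Function.Injective a) =
      n ^ m - n.descFactorial m := by
  have hinj : #(univ.filter fun a : Fin m → Fin n => Function.Injective a) =
      n.descFactorial m := by
    rw [← Fintype.card_subtype, Fintype.card_congr (Equiv.subtypeInjectiveEquivEmbedding _ _),
      Fintype.card_embedding_eq, Fintype.card_fin, Fintype.card_fin]
  have := card_filter_add_card_filter_not (s := univ) fun a : Fin m → Fin n =>
    Function.Injective a
  simp only [card_univ, Fintype.card_fun, Fintype.card_fin, hinj] at this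
  omega

lemma tendsto_descFactorial_div_pow (m : ℕ) :
    Tendsto (fun n : ℕ => (n.descFactorial m : ℝ) / n ^ m) atTop (𝓝 1) := by
  have hz : ∀ᶠ n : ℕ in atTop, (n : ℝ) ^ m ≠ 0 :=
    (eventually_ne_atTop 0).mono fun n hn => pow_ne_zero m (Nat.cast_ne_zero.mpr hn)
  exact (Asymptotics.isEquivalent_iff_tendsto_one hz).mp (isEquivalent_descFactorial m)

lemma tendsto_inv_pow_mul_of_abs_sub_le {S : ℕ → ℝ} {a C : ℝ} (m : ℕ)
    (h : ∀ n, |S n - a * n.descFactorial m| ≤ C * (n ^ m - n.descFactorial m)) :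
    Tendsto (fun n : ℕ => ((n : ℝ) ^ m)⁻¹ * S n) atTop (𝓝 a) := by
  have hd := tendsto_descFactorial_div_pow m
  have hmain : Tendsto (fun n : ℕ => a * (n.descFactorial m / n ^ m)) atTop (𝓝 a) := by
    simpa using hd.const_mul a
  have herr : Tendsto (fun n : ℕ => ((n : ℝ) ^ m)⁻¹ * S n - a * (n.descFactorial m / n ^ m))
      atTop (𝓝 0) := by
    refine squeeze_zero_norm' ?_
      (by simpa using ((tendsto_const_nhds (x := (1 : ℝ))).sub hd).const_mul C)
    filter_upwards [eventually_ne_atTop 0] with n hn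
    have hpow : (0 : ℝ) < (n : ℝ) ^ m := by positivity
    calc _ = ((n : ℝ) ^ m)⁻¹ * |S n - a * n.descFactorial m| := by
          rw [Real.norm_eq_abs, ← abs_of_pos (inv_pos.2 hpow), ← abs_mul,
            abs_of_pos (inv_pos.2 hpow)]
          congr 1
          field_simp
      _ ≤ ((n : ℝ) ^ m)⁻¹ * (C * (n ^ m - n.descFactorial m)) := by gcongr; exact h n
      _ = _ := by field_simp
  simpa using hmain.add herr

namespace ClassCI

open Finset

section Entries

variable {n : ℕ}

def side (p : Fin n ⊕ Fin n) : Bool := p.isRight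

def label (p : Fin n ⊕ Fin n) : Fin n := p.elim id id

def mk (b : Bool) (a : Fin n) : Fin n ⊕ Fin n := bif b then .inr a else .inl a

@[simp] lemma side_mk (b : Bool) (a : Fin n) : side (mk b a) = b := by cases b <;> rfl

@[simp] lemma label_mk (b : Bool) (a : Fin n) : label (mk b a) = a := by cases b <;> rfl

@[simp] lemma mk_side_label (p : Fin n ⊕ Fin n) : mk (side p) (label p) = p := by
  cases p <;> rfl

lemma eq_of_side_eq_of_label_eq {p p' : Fin n ⊕ Fin n} (hs : side p = side p')
    (hl : label p = label p') : p = p' := by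
  rw [← mk_side_label p, ← mk_side_label p', hs, hl]

def sideSign (b b' : Bool) : ℝ := if b && b' then -1 else 1

lemma sideSign_comm (b b' : Bool) : sideSign b b' = sideSign b' b := by
  cases b <;> cases b' <;> rfl

lemma sideSign_mul_self (b b' : Bool) : sideSign b b' * sideSign b b' = 1 := by
  cases b <;> cases b' <;> norm_num [sideSign]

lemma abs_sideSign (b b' : Bool) : |sideSign b b'| = 1 := by
  cases b <;> cases b' <;> norm_num [sideSign]

lemma sideSign_ne_zero (b b' : Bool) : sideSign b b' ≠ 0 := by
  cases b <;> cases b' <;> norm_num [sideSign]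

lemma sideSign_mul_sideSign_not (x y : Bool) :
    sideSign x y * sideSign (!x) (!y) = -1 * (sideSign x x * sideSign y y) := by
  cases x <;> cases y <;> norm_num [sideSign]

def entryClass (p q : Fin n ⊕ Fin n) : Bool × Sym2 (Fin n) :=
  (xor (side p) (side q), s(label p, label q))

lemma entryClass_comm (p q : Fin n ⊕ Fin n) : entryClass p q = entryClass q p := by
  simp [entryClass, Bool.xor_comm, Sym2.eq_swap]

lemma entryClass_eq_of_sym2_eq {ι : Type*} (v : ι → Fin n ⊕ Fin n) {x y x' y' : ι}
    (h : s(x, y) = s(x', y')) : entryClass (v x) (v y) = entryClass (v x') (v y') := by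
  rcases Sym2.eq_iff.mp h with ⟨rfl, rfl⟩ | ⟨rfl, rfl⟩
  · rfl
  · exact entryClass_comm _ _

@[simp] lemma entryClass_mk_xor (x y c : Bool) (a b : Fin n) :
    entryClass (mk (xor x c) a) (mk (xor y c) b) = entryClass (mk x a) (mk y b) := by
  cases x <;> cases y <;> cases c <;> rfl

lemma sideSign_mul_cIBlock (X₁ X₂ : Matrix (Fin n) (Fin n) ℝ) (p q : Fin n ⊕ Fin n) :
    sideSign (side p) (side q) * cIBlock X₁ X₂ p q =
      (bif xor (side p) (side q) then X₂ else X₁) (label p) (label q) := by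
  rcases p with a | a <;> rcases q with b | b <;> simp [cIBlock, sideSign, side, label]

lemma cIBlock_eq_of_entryClass_eq {X₁ X₂ : Matrix (Fin n) (Fin n) ℝ} (h₁ : X₁ᵀ = X₁)
    (h₂ : X₂ᵀ = X₂) {p q r s : Fin n ⊕ Fin n} (h : entryClass p q = entryClass r s) :
    cIBlock X₁ X₂ r s =
      sideSign (side r) (side s) * sideSign (side p) (side q) * cIBlock X₁ X₂ p q := by
  simp only [entryClass, Prod.mk.injEq] at h
  obtain ⟨hside, hlabel⟩ := h
  have hY : ∀ c : Bool, (bif c then X₂ else X₁)ᵀ = bif c then X₂ else X₁ := by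
    intro c; cases c <;> assumption
  have hsigned : sideSign (side r) (side s) * cIBlock X₁ X₂ r s =
      sideSign (side p) (side q) * cIBlock X₁ X₂ p q := by
    rw [sideSign_mul_cIBlock, sideSign_mul_cIBlock, hside]
    rcases Sym2.eq_iff.mp hlabel with ⟨h1, h2⟩ | ⟨h1, h2⟩
    · rw [h1, h2]
    · rw [h1, h2, ← Matrix.transpose_apply (bif _ then X₂ else X₁), hY]
  rw [mul_assoc, ← hsigned, ← mul_assoc, sideSign_mul_self, one_mul]

def sym2Indicator (z : Sym2 (Fin n)) : Matrix (Fin n) (Fin n) ℝ :=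
  fun x y => if s(x, y) = z then 1 else 0

lemma sym2Indicator_transpose (z : Sym2 (Fin n)) : (sym2Indicator z)ᵀ = sym2Indicator z := by
  ext x y
  simp [sym2Indicator, Sym2.eq_swap]

def classIndicator (κ : Bool × Sym2 (Fin n)) : Matrix (Fin n ⊕ Fin n) (Fin n ⊕ Fin n) ℝ :=
  cIBlock (bif κ.1 then 0 else sym2Indicator κ.2) (bif κ.1 then sym2Indicator κ.2 else 0)

lemma classIndicator_mem (κ : Bool × Sym2 (Fin n)) : classIndicator κ ∈ MCI n := by
  obtain ⟨_ | _, z⟩ := κ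
  · exact ⟨_, 0, sym2Indicator_transpose z, transpose_zero, rfl⟩
  · exact ⟨0, _, transpose_zero, sym2Indicator_transpose z, rfl⟩

lemma sideSign_mul_classIndicator (κ : Bool × Sym2 (Fin n)) (r s : Fin n ⊕ Fin n) :
    sideSign (side r) (side s) * classIndicator κ r s =
      if entryClass r s = κ then 1 else 0 := by
  obtain ⟨c, z⟩ := κ
  rw [classIndicator, sideSign_mul_cIBlock, entryClass]
  generalize xor (side r) (side s) = x
  cases x <;> cases c <;> simp [sym2Indicator]

lemma classIndicator_apply_eq_zero {κ : Bool × Sym2 (Fin n)} {r s : Fin n ⊕ Fin n}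
    (h : entryClass r s ≠ κ) : classIndicator κ r s = 0 := by
  have := sideSign_mul_classIndicator κ r s
  rw [if_neg h] at this
  exact (mul_eq_zero.mp this).resolve_left (sideSign_ne_zero _ _)

lemma classIndicator_apply_ne_zero (r s : Fin n ⊕ Fin n) :
    classIndicator (entryClass r s) r s ≠ 0 := by
  have := sideSign_mul_classIndicator (entryClass r s) r s
  rw [if_pos rfl] at this
  exact right_ne_zero_of_mul_eq_one this

lemma nonzeroAtCI (P : (Fin n ⊕ Fin n) × (Fin n ⊕ Fin n)) : NonzeroAtCI n P :=
  ⟨_, classIndicator_mem _, classIndicator_apply_ne_zero P.1 P.2⟩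

theorem simCI_iff (P Q : (Fin n ⊕ Fin n) × (Fin n ⊕ Fin n)) :
    simCI n P Q ↔ entryClass P.1 P.2 = entryClass Q.1 Q.2 := by
  refine ⟨fun ⟨_, _, hPQ⟩ => ?_, fun h => ⟨nonzeroAtCI P, nonzeroAtCI Q, ?_⟩⟩
  · by_contra hne
    have hP := classIndicator_apply_ne_zero P.1 P.2
    have hQ := classIndicator_apply_eq_zero (Ne.symm hne)
    rcases hPQ with hPQ | hPQ <;> rw [hPQ _ (classIndicator_mem _)] at hQ <;> simp_all
  · have hM : ∀ M ∈ MCI n, M Q.1 Q.2 =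
        (sideSign (side Q.1) (side Q.2) * sideSign (side P.1) (side P.2)) * M P.1 P.2 := by
      rintro M ⟨X₁, X₂, h₁, h₂, rfl⟩
      exact cIBlock_eq_of_entryClass_eq h₁ h₂ h
    have hsq : (sideSign (side Q.1) (side Q.2) * sideSign (side P.1) (side P.2)) *
        (sideSign (side Q.1) (side Q.2) * sideSign (side P.1) (side P.2)) = 1 := by
      rw [mul_mul_mul_comm, sideSign_mul_self, sideSign_mul_self, one_mul]
    rcases mul_self_eq_one_iff.mp hsq with hε | hε
    · exact Or.inl fun M hM' => by rw [hM M hM', hε, one_mul]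
    · exact Or.inr fun M hM' => by rw [hM M hM', hε, neg_one_mul]

section Moments

variable {Ω : Type*} [MeasurableSpace Ω] (μ : Measure Ω) {σ : ℝ}
  {Y : Fin 2 → Ω → Matrix (Fin n) (Fin n) ℝ}

lemma integral_cIBlock_mul_cIBlock (hY : ∀ i ω, (Y i ω)ᵀ = Y i ω)
    (hvar : ∀ i a b, ∫ ω, |Y i ω a b| ^ 2 ∂μ = σ ^ 2) {p q r s : Fin n ⊕ Fin n}
    (h : entryClass p q = entryClass r s) :
    ∫ ω, cIBlock (Y 0 ω) (Y 1 ω) p q * cIBlock (Y 0 ω) (Y 1 ω) r s ∂μ =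
      sideSign (side p) (side q) * sideSign (side r) (side s) * σ ^ 2 := by
  obtain ⟨i, hi⟩ : ∃ i : Fin 2,
      ∀ ω, (bif xor (side p) (side q) then Y 1 ω else Y 0 ω) = Y i ω :=
    ⟨bif xor (side p) (side q) then 1 else 0, fun ω => by cases xor (side p) (side q) <;> rfl⟩
  have hpt : ∀ ω, cIBlock (Y 0 ω) (Y 1 ω) p q * cIBlock (Y 0 ω) (Y 1 ω) r s =
      sideSign (side p) (side q) * sideSign (side r) (side s) *
        |Y i ω (label p) (label q)| ^ 2 := by
    intro ω
    have hpq : sideSign (side p) (side q) * cIBlock (Y 0 ω) (Y 1 ω) p q =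
        Y i ω (label p) (label q) := by
      rw [sideSign_mul_cIBlock, hi]
    rw [cIBlock_eq_of_entryClass_eq (hY 0 ω) (hY 1 ω) h, ← hpq, abs_mul, abs_sideSign, one_mul,
      sq_abs]
    ring
  rw [integral_congr_ae (ae_of_all μ hpt), integral_const_mul, hvar]

end Moments

end Entries

variable {n m : ℕ}

def rowSign (Q : Fin m → (Fin n ⊕ Fin n) × (Fin n ⊕ Fin n)) : ℝ :=
  ∏ l, sideSign (side (Q l).1) (side (Q l).2)

lemma abs_rowSign (Q : Fin m → (Fin n ⊕ Fin n) × (Fin n ⊕ Fin n)) : |rowSign Q| = 1 := by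
  simp [rowSign, abs_prod, abs_sideSign]

variable [NeZero m]

lemma prod_sideSign_mul_sideSign_xor (s : Fin m → Bool) (c : Bool) :
    ∏ l, sideSign (s l) (s (l + 1)) * sideSign (xor (s l) c) (xor (s (l + 1)) c) =
      bif c then (-1) ^ m else 1 := by
  cases c
  · simp [sideSign_mul_self]
  · have hshift : ∏ l : Fin m, sideSign (s (l + 1)) (s (l + 1)) = ∏ l, sideSign (s l) (s l) :=
      Equiv.prod_comp (Equiv.addRight 1) fun l => sideSign (s l) (s l)
    simp only [Bool.xor_true, sideSign_mul_sideSign_not, prod_mul_distrib,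
      prod_const, card_univ, Fintype.card_fin, hshift]
    rw [← prod_mul_distrib]
    simp [sideSign_mul_self]

theorem sGoodCI_iff {g : Fin m → Fin m} (hg : Function.Bijective g)
    (P : Fin 2 → Fin m → (Fin n ⊕ Fin n) × (Fin n ⊕ Fin n)) :
    SGoodCI n m g P ↔ IsConsistent P ∧
      (∀ l, entryClass (P 1 (g l)).1 (P 1 (g l)).2 = entryClass (P 0 l).1 (P 0 l).2) ∧
      Function.Injective fun l => entryClass (P 0 l).1 (P 0 l).2 := by
  simp only [SGoodCI, simCI_iff, nonzeroAtCI, implies_true, true_and]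
  rw [forall_eq_iff_pairing_iff hg fun i l => entryClass (P i l).1 (P i l).2]

lemma IsConsistent.ext {P P' : Fin 2 → Fin m → (Fin n ⊕ Fin n) × (Fin n ⊕ Fin n)}
    (hP : IsConsistent P) (hP' : IsConsistent P') (h : ∀ i l, (P i l).1 = (P' i l).1) :
    P = P' :=
  funext fun i => funext fun l => Prod.ext (h i l) (by rw [hP, hP', h])

def cyclePairs {α : Type*} (v : Fin m → α) : Fin m → α × α := fun l => (v l, v (l + 1))

def goodIndex (φ : Equiv.Perm (Fin m)) (s : Fin m → Bool) (c : Bool) (a : Fin m → Fin n) :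
    Fin 2 → Fin m → (Fin n ⊕ Fin n) × (Fin n ⊕ Fin n) :=
  ![cyclePairs fun l => mk (s l) (a l), cyclePairs fun j => mk (xor (s (φ j)) c) (a (φ j))]

lemma isConsistent_goodIndex (φ : Equiv.Perm (Fin m)) (s : Fin m → Bool) (c : Bool)
    (a : Fin m → Fin n) : IsConsistent (goodIndex φ s c a) := by
  intro i l
  fin_cases i <;> rfl

section Moments

variable {Ω : Type*} [MeasurableSpace Ω] (μ : Measure Ω)

def pairedMoment (Y : Fin 2 → Ω → Matrix (Fin n) (Fin n) ℝ) (g : Fin m → Fin m)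
    (P : Fin 2 → Fin m → (Fin n ⊕ Fin n) × (Fin n ⊕ Fin n)) : ℝ :=
  ∏ l, ∫ ω, cIBlock (Y 0 ω) (Y 1 ω) (P 0 l).1 (P 0 l).2 *
    cIBlock (Y 0 ω) (Y 1 ω) (P 1 (g l)).1 (P 1 (g l)).2 ∂μ

variable {σ : ℝ} {Y : Fin 2 → Ω → Matrix (Fin n) (Fin n) ℝ}

lemma pairedMoment_eq (hY : ∀ i ω, (Y i ω)ᵀ = Y i ω)
    (hvar : ∀ i a b, ∫ ω, |Y i ω a b| ^ 2 ∂μ = σ ^ 2) {g : Fin m → Fin m}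
    (hg : Function.Bijective g) {P : Fin 2 → Fin m → (Fin n ⊕ Fin n) × (Fin n ⊕ Fin n)}
    (hP : SGoodCI n m g P) :
    pairedMoment μ Y g P = rowSign (P 0) * rowSign (P 1) * (σ ^ 2) ^ m := by
  obtain ⟨-, hmatch, -⟩ := (sGoodCI_iff hg P).mp hP
  have hrow : ∏ l, sideSign (side (P 1 (g l)).1) (side (P 1 (g l)).2) = rowSign (P 1) :=
    Equiv.prod_comp (Equiv.ofBijective g hg) fun j => sideSign (side (P 1 j).1) (side (P 1 j).2)
  simp only [pairedMoment, integral_cIBlock_mul_cIBlock μ hY hvar (hmatch _).symm,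
    prod_mul_distrib, prod_const, card_univ, Fintype.card_fin, hrow, rowSign]

end Moments

section EdgePerm

variable {g : Fin m → Fin m} {φ : Equiv.Perm (Fin m)} (hm : 3 ≤ m)
  (hφ : ∀ l, s(φ (g l), φ (g l + 1)) = s(l, l + 1))
include hm hφ

lemma sGoodCI_goodIndex (s : Fin m → Bool) (c : Bool) {a : Fin m → Fin n}
    (ha : Function.Injective a) : SGoodCI n m g (goodIndex φ s c a) := by
  refine (sGoodCI_iff (bijective_of_sym2_eq hm hφ) _).mpr ⟨fun i l => ?_, fun l => ?_, ?_⟩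
  · exact isConsistent_goodIndex φ s c a i l
  · simpa [goodIndex, cyclePairs] using
      entryClass_eq_of_sym2_eq (fun k => mk (s k) (a k)) (hφ l)
  · intro l l' h
    have hlabel : Sym2.map a s(l, l + 1) = Sym2.map a s(l', l' + 1) := by
      simpa [goodIndex, cyclePairs, entryClass] using congrArg Prod.snd h
    exact injective_sym2_add_one hm (Sym2.map.injective ha hlabel)

lemma entryClass_row_one {P : Fin 2 → Fin m → (Fin n ⊕ Fin n) × (Fin n ⊕ Fin n)}
    (hP : SGoodCI n m g P) (j : Fin m) :
    entryClass (P 1 j).1 (P 1 (j + 1)).1 = entryClass (P 0 (φ j)).1 (P 0 (φ (j + 1))).1 := by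
  have hg := bijective_of_sym2_eq hm hφ
  obtain ⟨hcons, hmatch, -⟩ := (sGoodCI_iff hg P).mp hP
  obtain ⟨l, rfl⟩ := hg.2 j
  rw [← hcons 1 (g l), hmatch l, hcons 0 l]
  exact (entryClass_eq_of_sym2_eq (fun k => (P 0 k).1) (hφ l)).symm

lemma label_row_one {P : Fin 2 → Fin m → (Fin n ⊕ Fin n) × (Fin n ⊕ Fin n)}
    (hP : SGoodCI n m g P) (j : Fin m) :
    label (P 1 j).1 = label (P 0 (φ j)).1 ∨ label (P 1 j).1 = label (P 0 (φ (j + 1))).1 :=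
  (Sym2.eq_iff.mp (congrArg Prod.snd (entryClass_row_one hm hφ hP j))).imp And.left And.left

lemma label_row_one_eq_ite {P : Fin 2 → Fin m → (Fin n ⊕ Fin n) × (Fin n ⊕ Fin n)}
    (hP : SGoodCI n m g P) (j : Fin m) :
    label (P 1 j).1 = if label (P 1 j).1 = label (P 0 (φ j)).1 then label (P 0 (φ j)).1
      else label (P 0 (φ (j + 1))).1 := by
  split_ifs with h
  · exact h
  · exact (label_row_one hm hφ hP j).resolve_left h

lemma goodIndex_eq {P : Fin 2 → Fin m → (Fin n ⊕ Fin n) × (Fin n ⊕ Fin n)}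
    (hP : SGoodCI n m g P) (hinj : Function.Injective fun l => label (P 0 l).1) :
    goodIndex φ (fun l => side (P 0 l).1) (xor (side (P 1 0).1) (side (P 0 (φ 0)).1))
      (fun l => label (P 0 l).1) = P := by
  have hclass := entryClass_row_one hm hφ hP
  have hlabel : (fun j => label (P 1 j).1) = fun j => label (P 0 (φ j)).1 :=
    eq_of_forall_sym2_eq hm (hinj.comp φ.injective) fun j => congrArg Prod.snd (hclass j)
  have hside : ∀ j, xor (side (P 1 j).1) (side (P 0 (φ j)).1) =
      xor (side (P 1 0).1) (side (P 0 (φ 0)).1) :=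
    Fin.apply_eq_apply_zero_of_apply_add_one fun j =>
      Bool.xor_swap_of_xor_eq (congrArg Prod.fst (hclass j))
  refine IsConsistent.ext (isConsistent_goodIndex _ _ _ _) hP.1 fun i l => ?_
  fin_cases i
  · simp [goodIndex, cyclePairs]
  · simp [goodIndex, cyclePairs, ← hside l, ← congrFun hlabel l,
      Bool.xor_comm (side (P 1 l).1)]

lemma prod_apply_perm_of_sym2_eq {M : Type*} [CommMonoid M] (f : Fin m → Fin m → M)
    (hf : ∀ x y, f x y = f y x) : ∏ j, f (φ j) (φ (j + 1)) = ∏ l, f l (l + 1) := by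
  rw [← (Equiv.ofBijective g (bijective_of_sym2_eq hm hφ)).prod_comp]
  exact prod_congr rfl fun l _ => by simpa using congrArg (Sym2.lift ⟨f, hf⟩) (hφ l)

lemma rowSign_goodIndex_mul_rowSign (s : Fin m → Bool) (c : Bool) (a : Fin m → Fin n) :
    rowSign (goodIndex φ s c a 0) * rowSign (goodIndex φ s c a 1) =
      bif c then (-1) ^ m else 1 := by
  have h := prod_apply_perm_of_sym2_eq hm hφ (fun x y => sideSign (xor (s x) c) (xor (s y) c))
    fun x y => sideSign_comm _ _
  simp [rowSign, goodIndex, cyclePairs, h, ← prod_mul_distrib, prod_sideSign_mul_sideSign_xor]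

open scoped Classical

/-- A good multi-index is determined by its first row and, at each vertex `j` of the second
row, its side and which of the two labels allowed by `label_row_one` it carries. -/
lemma card_filter_not_injective_le :
    #((univ.filter (SGoodCI n m g)).filter fun P => ¬Function.Injective fun l => label (P 0 l).1)
      ≤ 8 ^ m * (n ^ m - n.descFactorial m) := by
  rw [← card_filter_not_injective]
  calc _ ≤ #((univ.filter fun a : Fin m → Fin n => ¬Function.Injective a) ×ˢ
        (univ : Finset (Fin m → Bool × Bool × Bool))) := by
        refine card_le_card_of_injOn (fun P => (fun l => label (P 0 l).1, fun j =>
          (side (P 0 j).1, side (P 1 j).1, decide (label (P 1 j).1 = label (P 0 (φ j)).1))))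
          (fun P hP => ?_) fun P hP P' hP' hPP' => ?_
        · simp only [coe_filter, Set.mem_ofPred_eq, mem_filter, mem_univ, true_and] at hP
          simpa using hP.2
        · simp only [coe_filter, Set.mem_ofPred_eq, mem_filter, mem_univ, true_and] at hP hP'
          simp only [Prod.mk.injEq, funext_iff, decide_eq_decide] at hPP'
          obtain ⟨hlabel, hside⟩ := hPP'
          refine IsConsistent.ext hP.1.1 hP'.1.1
            (Fin.forall_fin_two.mpr ⟨fun j => ?_, fun j => ?_⟩)
          · exact eq_of_side_eq_of_label_eq (hside j).1 (hlabel j)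
          · refine eq_of_side_eq_of_label_eq (hside j).2.1 ?_
            rw [label_row_one_eq_ite hm hφ hP.1, label_row_one_eq_ite hm hφ hP'.1]
            exact if_congr (hside j).2.2 (hlabel _) (hlabel _)
    _ = _ := by simp [mul_comm]

variable {Ω : Type*} [MeasurableSpace Ω] (μ : Measure Ω) {σ : ℝ}
  {Y : Fin 2 → Ω → Matrix (Fin n) (Fin n) ℝ}

lemma sum_pairedMoment_injective (hY : ∀ i ω, (Y i ω)ᵀ = Y i ω)
    (hvar : ∀ i a b, ∫ ω, |Y i ω a b| ^ 2 ∂μ = σ ^ 2) :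
    ∑ P ∈ (univ.filter (SGoodCI n m g)).filter
        (fun P => Function.Injective fun l => label (P 0 l).1), pairedMoment μ Y g P =
      2 ^ m * (1 + (-1) ^ m) * (σ ^ 2) ^ m * n.descFactorial m := by
  calc _ = ∑ x : (Fin m → Bool) × Bool × (Fin m ↪ Fin n),
        (bif x.2.1 then (-1) ^ m else 1) * (σ ^ 2) ^ m := by
        symm
        refine sum_bij' (fun x _ => goodIndex φ x.1 x.2.1 x.2.2)
          (fun P hP => (fun l => side (P 0 l).1, xor (side (P 1 0).1) (side (P 0 (φ 0)).1),
            ⟨fun l => label (P 0 l).1, (mem_filter.mp hP).2⟩)) ?_ ?_ ?_ ?_ ?_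
        · rintro ⟨s, c, a⟩ -
          simp only [mem_filter, mem_univ, true_and]
          exact ⟨sGoodCI_goodIndex hm hφ s c a.injective, by
            simpa [goodIndex, cyclePairs] using a.injective⟩
        · intros; exact mem_univ _
        · rintro ⟨s, c, a⟩ -
          simp [goodIndex, cyclePairs, Bool.xor_comm c]
        · intro P hP
          simp only [mem_filter, mem_univ, true_and] at hP
          exact goodIndex_eq hm hφ hP.1 hP.2
        · rintro ⟨s, c, a⟩ -
          rw [pairedMoment_eq μ hY hvar (bijective_of_sym2_eq hm hφ)
            (sGoodCI_goodIndex hm hφ s c a.injective), rowSign_goodIndex_mul_rowSign hm hφ]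
    _ = _ := by
      simp [Fintype.sum_prod_type, Fintype.card_embedding_eq]
      ring

lemma abs_sum_pairedMoment_sub_le (hY : ∀ i ω, (Y i ω)ᵀ = Y i ω)
    (hvar : ∀ i a b, ∫ ω, |Y i ω a b| ^ 2 ∂μ = σ ^ 2) :
    |∑ P ∈ univ.filter (SGoodCI n m g), pairedMoment μ Y g P -
        2 ^ m * (1 + (-1) ^ m) * (σ ^ 2) ^ m * n.descFactorial m| ≤
      8 ^ m * (σ ^ 2) ^ m * (n ^ m - n.descFactorial m) := by
  rw [← sum_filter_add_sum_filter_not _ (fun P => Function.Injective fun l => label (P 0 l).1),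
    sum_pairedMoment_injective hm hφ μ hY hvar, add_sub_cancel_left]
  have hterm : ∀ P ∈ (univ.filter (SGoodCI n m g)).filter
      (fun P => ¬Function.Injective fun l => label (P 0 l).1),
      |pairedMoment μ Y g P| = (σ ^ 2) ^ m := by
    intro P hP
    simp only [mem_filter, mem_univ, true_and] at hP
    rw [pairedMoment_eq μ hY hvar (bijective_of_sym2_eq hm hφ) hP.1, abs_mul, abs_mul,
      abs_rowSign, abs_rowSign, one_mul, one_mul, abs_of_nonneg (by positivity)]
  have hcard := card_filter_not_injective_le (n := n) hm hφ
  calc _ ≤ _ := abs_sum_le_sum_abs _ _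
    _ = _ := sum_congr rfl hterm
    _ ≤ 8 ^ m * (n ^ m - n.descFactorial m : ℕ) * (σ ^ 2) ^ m := by
      rw [sum_const, nsmul_eq_mul]
      gcongr
      exact_mod_cast hcard
    _ = _ := by
      rw [Nat.cast_sub (Nat.descFactorial_le_pow n m), Nat.cast_pow]
      ring

end EdgePerm

end ClassCI

open ClassCI in
theorem stmt17_general
    {Ω : Type*} [MeasurableSpace Ω] (μ : Measure Ω)
    (σ : ℝ)
    (X : (n : ℕ) → Fin 2 → Ω → Matrix (Fin n) (Fin n) ℝ)
    (hsymm : ∀ n i ω a b, X n i ω b a = X n i ω a b)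
    (hvar : ∀ n i (a b : Fin n), ∫ ω, |X n i ω a b| ^ 2 ∂μ = σ ^ 2)
    (m : ℕ) [NeZero m] (hm : 3 ≤ m)
    -- `g ∈ D_{2m}`: in the `0`-based labels `Fin m` of `[m]`, `γ : l ↦ l + 1` and
    -- `τ : l ↦ -l - 1`, so `g` is either `γ^ν : l ↦ l + ν` or `τγ^ν : l ↦ -(l + ν) - 1`.
    (g : Fin m → Fin m)
    (hg : (∃ ν : Fin m, g = fun l => l + ν) ∨ (∃ ν : Fin m, g = fun l => -(l + ν) - 1)) :
    Tendsto (fun n : ℕ =>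
      ((n : ℝ) ^ m)⁻¹ *
        ∑ᶠ P ∈ {P : Fin 2 → Fin m → ((Fin n ⊕ Fin n) × (Fin n ⊕ Fin n)) |
            SGoodCI n m g P},
          ∏ l : Fin m, ∫ ω, cIBlock (X n 0 ω) (X n 1 ω) (P 0 l).1 (P 0 l).2 *
            cIBlock (X n 0 ω) (X n 1 ω) (P 1 (g l)).1 (P 1 (g l)).2 ∂μ)
      atTop
      (nhds (if Odd m then 0 else 2 ^ (m + 1) * σ ^ (2 * m))) := by
  classical
  obtain ⟨φ, hφ⟩ := exists_perm_sym2_eq_of_dihedral hg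
  have hlimit : (if Odd m then 0 else 2 ^ (m + 1) * σ ^ (2 * m) : ℝ) =
      2 ^ m * (1 + (-1) ^ m) * (σ ^ 2) ^ m := by
    split_ifs with hodd
    · rw [hodd.neg_one_pow]; ring
    · rw [(Nat.not_odd_iff_even.mp hodd).neg_one_pow]; ring
  rw [hlimit]
  refine tendsto_inv_pow_mul_of_abs_sub_le (C := 8 ^ m * (σ ^ 2) ^ m) m fun n => ?_
  change |∑ᶠ P ∈ {P | SGoodCI n m g P}, pairedMoment μ (X n) g P - _| ≤ _
  rw [← Finset.coe_filter_univ, finsum_mem_coe_finset]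
  exact abs_sum_pairedMoment_sub_le hm hφ μ (fun i ω => Matrix.ext fun a b => hsymm n i ω a b)
    (hvar n)

theorem stmt17
    {Ω : Type*} [MeasurableSpace Ω] (μ : Measure Ω) [IsProbabilityMeasure μ]
    (σ : ℝ) (hσ : 0 < σ)
    (X : (n : ℕ) → Fin 2 → Ω → Matrix (Fin n) (Fin n) ℝ)
    (hmeas : ∀ n i a b, Measurable fun ω => X n i ω a b)
    (hsymm : ∀ n i ω a b, X n i ω b a = X n i ω a b)
    (hindep : ∀ n, iIndepFun
      (fun (v : {v : Fin 2 × Fin n × Fin n // v.2.1 ≤ v.2.2}) ω =>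
        X n v.1.1 ω v.1.2.1 v.1.2.2) μ)
    (hcent : ∀ n i a b, ∫ ω, X n i ω a b ∂μ = 0)
    (hvar : ∀ n i (a b : Fin n), ∫ ω, |X n i ω a b| ^ 2 ∂μ = σ ^ 2)
    (hmom : ∀ k : ℕ, ∃ C : ℝ, ∀ n i (a b : Fin n),
      ∫ ω, |X n i ω a b| ^ k ∂μ ≤ C)
    (m : ℕ) [NeZero m] (hm : 3 ≤ m)
    -- `g ∈ D_{2m}`: in the `0`-based labels `Fin m` of `[m]`, `γ : l ↦ l + 1` and
    -- `τ : l ↦ -l - 1`, so `g` is either `γ^ν : l ↦ l + ν` or `τγ^ν : l ↦ -(l + ν) - 1`.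
    (g : Fin m → Fin m)
    (hg : (∃ ν : Fin m, g = fun l => l + ν) ∨ (∃ ν : Fin m, g = fun l => -(l + ν) - 1)) :
    Tendsto (fun n : ℕ =>
      ((n : ℝ) ^ m)⁻¹ *
        ∑ᶠ P ∈ {P : Fin 2 → Fin m → ((Fin n ⊕ Fin n) × (Fin n ⊕ Fin n)) |
            SGoodCI n m g P},
          ∏ l : Fin m, ∫ ω, cIBlock (X n 0 ω) (X n 1 ω) (P 0 l).1 (P 0 l).2 *
            cIBlock (X n 0 ω) (X n 1 ω) (P 1 (g l)).1 (P 1 (g l)).2 ∂μ)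
      atTop
      (nhds (if Odd m then 0 else 2 ^ (m + 1) * σ ^ (2 * m))) :=
  stmt17_general μ σ X hsymm hvar m hm g hg
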